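/- For every 1 ≤ i ≤ 2^ν, the element Ψ_{t_i} has order 3m = 3(3s₂ + 2^ν) in G(Σ, e); that is, 3m·Ψ_{t_i} = 0 and k·Ψ_{t_i} ≠ 0 for every integer 1 ≤ k < 3m. -/

import Mathlib

/-- The subgroup of relations: `e s • ψ s - e t • ψ t` for all `s t`, together with
`∑ s, ψ s`. -/
noncomputable def relSub {S : Type*} [Fintype S] (e : S → ℤ) : AddSubgroup (S →₀ ℤ) :=
  AddSubgroup.closure
    ({x | ∃ s t : S, x = Finsupp.single s (e s) - Finsupp.single t (e t)} ∪
      {∑ s : S, Finsupp.single s 1})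

/-- `G(Σ, e)`: the quotient of the free abelian group on `Σ` by the relations. -/
abbrev CompGrp {S : Type*} [Fintype S] (e : S → ℤ) : Type _ :=
  (S →₀ ℤ) ⧸ relSub e

/-- `Ψ s`: the image of the basis element `ψ s` in `G(Σ, e)`. -/
noncomputable def Psi {S : Type*} [Fintype S] (e : S → ℤ) (s : S) : CompGrp e :=
  QuotientAddGroup.mk (Finsupp.single s 1)

/-- `Σ = Σ₂ ⊔ Σ₆` with `#Σ₂ = s₂` and `#Σ₆ = 2^ν`. -/
abbrev Sig2 (s₂ ν : ℕ) : Type := Fin s₂ ⊕ Fin (2 ^ ν)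

/-- `e ≡ 1` on `Σ₂` and `e ≡ 3` on `Σ₆`. -/
def e2 (s₂ ν : ℕ) : Sig2 s₂ ν → ℤ := Sum.elim (fun _ => 1) (fun _ => 3)

/-- `t i` (`1`-based): the `i`-th point of `Σ₆ = {t_1, …, t_{2^ν}}`. -/
def tPt (s₂ ν : ℕ) (i : ℕ) : Sig2 s₂ ν :=
  Sum.inr ⟨(i - 1) % 2 ^ ν, Nat.mod_lt _ (Nat.pow_pos (by norm_num))⟩

/-- The generators `v_j` (`1`-based, `v_0 := Ψ 𝔰`):
`v_{2k-1} = Ψ t_{2k-1} - Ψ t_{2k}` and `v_{2k} = Ψ t_{2k-1} + Ψ t_{2k} - Ψ t - Ψ t'`,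
where `t = t_{2^ν - 1}` and `t' = t_{2^ν}`. -/
noncomputable def vGen (s₂ ν : ℕ) (𝔰 : Fin s₂) : ℕ → CompGrp (e2 s₂ ν) := fun j =>
  if j = 0 then Psi (e2 s₂ ν) (Sum.inl 𝔰)
  else if j % 2 = 1 then
    Psi (e2 s₂ ν) (tPt s₂ ν j) - Psi (e2 s₂ ν) (tPt s₂ ν (j + 1))
  else
    Psi (e2 s₂ ν) (tPt s₂ ν (j - 1)) + Psi (e2 s₂ ν) (tPt s₂ ν j)
      - Psi (e2 s₂ ν) (tPt s₂ ν (2 ^ ν - 1)) - Psi (e2 s₂ ν) (tPt s₂ ν (2 ^ ν))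

/-!
All the elements `e s • Ψ s` coincide, so `Ψ a = 3 • Ψ t` for `a ∈ Σ₂` and `3 • Ψ b = 3 • Ψ t` for
`b ∈ Σ₆`; three times the relation `∑ Ψ s = 0` then reads `3m • Ψ t = 0`. Conversely, pick a second
point `t'' ∈ Σ₆`: sending `Ψ a ↦ 3` on `Σ₂`, `Ψ t'' ↦ 1 - m` and every other `Ψ b ↦ 1` on `Σ₆`
respects the relations in `ℤ/3m` (each `e s • f s` is `3`, and the values add up to `3 s₂ + 2^ν - m = 0`),
and maps `Ψ t` to the generator `1`, so the order of `Ψ t` is at least `3m`.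
-/

namespace CompGrp

variable {S : Type*} [Fintype S] (e : S → ℤ)

theorem zsmul_Psi_eq_zsmul_Psi (s t : S) : e s • Psi e s = e t • Psi e t := by
  have hrel : ((Finsupp.single s (e s) - Finsupp.single t (e t) : S →₀ ℤ) : CompGrp e) = 0 :=
    (QuotientAddGroup.eq_zero_iff _).mpr (AddSubgroup.subset_closure (Or.inl ⟨s, t, rfl⟩))
  rw [QuotientAddGroup.mk_sub, sub_eq_zero] at hrel
  simpa only [Psi, ← QuotientAddGroup.mk_zsmul, Finsupp.smul_single, smul_eq_mul, mul_one]
    using hrel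

theorem sum_Psi_eq_zero : ∑ s, Psi e s = 0 := by
  have hrel : ((∑ s, Finsupp.single s 1 : S →₀ ℤ) : CompGrp e) = 0 :=
    (QuotientAddGroup.eq_zero_iff _).mpr (AddSubgroup.subset_closure (Or.inr rfl))
  rw [← hrel, ← QuotientAddGroup.mk'_apply, map_sum]
  rfl

variable {e} {A : Type*} [AddCommGroup A] (f : S → A)

theorem relSub_le_ker_liftAddHom (hf : ∀ s t, e s • f s = e t • f t) (hsum : ∑ s, f s = 0) :
    relSub e ≤ (Finsupp.liftAddHom fun s => zmultiplesHom A (f s)).ker := by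
  rw [relSub, AddSubgroup.closure_le]
  rintro x (⟨s, t, rfl⟩ | rfl)
  · rw [SetLike.mem_coe, AddMonoidHom.mem_ker, map_sub, Finsupp.liftAddHom_apply_single,
      Finsupp.liftAddHom_apply_single, zmultiplesHom_apply, zmultiplesHom_apply, hf s t, sub_self]
  · simpa only [SetLike.mem_coe, AddMonoidHom.mem_ker, map_sum, Finsupp.liftAddHom_apply_single,
      zmultiplesHom_apply, one_zsmul] using hsum

noncomputable def lift (hf : ∀ s t, e s • f s = e t • f t) (hsum : ∑ s, f s = 0) :
    CompGrp e →+ A :=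
  QuotientAddGroup.lift _ _ (relSub_le_ker_liftAddHom f hf hsum)

@[simp]
theorem lift_Psi (hf : ∀ s t, e s • f s = e t • f t) (hsum : ∑ s, f s = 0) (s : S) :
    lift f hf hsum (Psi e s) = f s := by
  simp [lift, Psi]

end CompGrp

open CompGrp

section WeightsOneThree

variable {α β : Type*} [Fintype α] [Fintype β]

theorem nsmul_Psi_inr_eq_zero (b : β) :
    (3 * (3 * Fintype.card α + Fintype.card β)) •
      Psi (Sum.elim (fun _ : α => (1 : ℤ)) (fun _ : β => 3)) (Sum.inr b) = 0 := by
  set e := Sum.elim (fun _ : α => (1 : ℤ)) (fun _ : β => 3)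
  set T := Psi e (Sum.inr b)
  have hinl (a : α) : Psi e (Sum.inl a) = (3 : ℤ) • T := by
    simpa [e] using zsmul_Psi_eq_zsmul_Psi e (Sum.inl a) (Sum.inr b)
  have hinr (b' : β) : (3 : ℤ) • Psi e (Sum.inr b') = (3 : ℤ) • T :=
    zsmul_Psi_eq_zsmul_Psi e (Sum.inr b') (Sum.inr b)
  calc (3 * (3 * Fintype.card α + Fintype.card β)) • T
      = ∑ a : α, (3 : ℤ) • Psi e (Sum.inl a) + ∑ b' : β, (3 : ℤ) • Psi e (Sum.inr b') := by
        simp only [hinl, hinr, Finset.sum_const, Finset.card_univ]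
        module
    _ = (3 : ℤ) • ∑ s, Psi e s := by rw [Finset.smul_sum, Fintype.sum_sum_type]
    _ = 0 := by rw [sum_Psi_eq_zero, smul_zero]

theorem dvd_addOrderOf_Psi_inr [DecidableEq β] {b b' : β} (hne : b ≠ b') :
    3 * (3 * Fintype.card α + Fintype.card β) ∣
      addOrderOf (Psi (Sum.elim (fun _ : α => (1 : ℤ)) (fun _ : β => 3)) (Sum.inr b)) := by
  set m := 3 * Fintype.card α + Fintype.card β
  let f : α ⊕ β → ZMod (3 * m) :=
    Sum.elim (fun _ => 3) (fun x => 1 - (Pi.single b' (m : ZMod (3 * m)) : β → ZMod (3 * m)) x)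
  have hf3 : ∀ s, Sum.elim (fun _ : α => (1 : ℤ)) (fun _ : β => 3) s • f s = 3 := by
    have h3m : (3 : ZMod (3 * m)) * m = 0 := by exact_mod_cast ZMod.natCast_self (3 * m)
    rintro (a | x)
    · simp [f]
    · by_cases hx : x = b' <;> simp [f, hx, mul_sub, h3m]
  have hsum : ∑ s, f s = 0 := by
    simp only [f, m, Fintype.sum_sum_type, Sum.elim_inl, Sum.elim_inr, Finset.sum_const,
      Finset.card_univ, nsmul_eq_mul, Finset.sum_sub_distrib, mul_one, Finset.sum_pi_single',
      Finset.mem_univ, if_true, Nat.cast_add, Nat.cast_mul, Nat.cast_ofNat]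
    ring
  have hφ := addOrderOf_map_dvd (lift f (fun s t => (hf3 s).trans (hf3 t).symm) hsum)
    (Psi _ (Sum.inr b))
  have hfb : f (Sum.inr b) = 1 := by simp [f, hne]
  rwa [lift_Psi, hfb, ZMod.addOrderOf_one] at hφ

theorem addOrderOf_Psi_inr (hβ : 1 < Fintype.card β) (b : β) :
    addOrderOf (Psi (Sum.elim (fun _ : α => (1 : ℤ)) (fun _ : β => 3)) (Sum.inr b)) =
      3 * (3 * Fintype.card α + Fintype.card β) := by
  classical
  obtain ⟨b', hb'⟩ := Fintype.exists_ne_of_one_lt_card hβ b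
  exact Nat.dvd_antisymm (addOrderOf_dvd_of_nsmul_eq_zero (nsmul_Psi_inr_eq_zero b))
    (dvd_addOrderOf_Psi_inr hb'.symm)

end WeightsOneThree

theorem stmt4_general (s₂ ν : ℕ) (hν : 1 ≤ ν) :
    ∀ i : ℕ, 1 ≤ i → i ≤ 2 ^ ν →
      addOrderOf (Psi (e2 s₂ ν) (tPt s₂ ν i)) = 3 * (3 * s₂ + 2 ^ ν) ∧
      (3 * (3 * s₂ + 2 ^ ν)) • Psi (e2 s₂ ν) (tPt s₂ ν i) = 0 ∧
      (∀ k : ℕ, 1 ≤ k → k < 3 * (3 * s₂ + 2 ^ ν) →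
        k • Psi (e2 s₂ ν) (tPt s₂ ν i) ≠ 0) := by
  intro i _ _
  have hcard : 1 < Fintype.card (Fin (2 ^ ν)) := by
    simpa using Nat.one_lt_two_pow (Nat.one_le_iff_ne_zero.mp hν)
  have hord : addOrderOf (Psi (e2 s₂ ν) (tPt s₂ ν i)) = 3 * (3 * s₂ + 2 ^ ν) := by
    have := addOrderOf_Psi_inr (α := Fin s₂) hcard ⟨(i - 1) % 2 ^ ν, Nat.mod_lt _ (by positivity)⟩
    rwa [Fintype.card_fin, Fintype.card_fin] at this
  refine ⟨hord, hord ▸ addOrderOf_nsmul_eq_zero _, fun k hk hlt => ?_⟩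
  exact nsmul_ne_zero_of_lt_addOrderOf (by omega) (hord ▸ hlt)

/-- each `Ψ t_i` (`1 ≤ i ≤ 2^ν`) has order `3m = 3(3s₂ + 2^ν)`:
`3m • Ψ t_i = 0` and `k • Ψ t_i ≠ 0` for `1 ≤ k < 3m`. -/
theorem stmt4 (s₂ ν : ℕ) (hs : 1 ≤ s₂) (hν : 1 ≤ ν) :
    ∀ i : ℕ, 1 ≤ i → i ≤ 2 ^ ν →
      addOrderOf (Psi (e2 s₂ ν) (tPt s₂ ν i)) = 3 * (3 * s₂ + 2 ^ ν) ∧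
      (3 * (3 * s₂ + 2 ^ ν)) • Psi (e2 s₂ ν) (tPt s₂ ν i) = 0 ∧
      (∀ k : ℕ, 1 ≤ k → k < 3 * (3 * s₂ + 2 ^ ν) →
        k • Psi (e2 s₂ ν) (tPt s₂ ν i) ≠ 0) :=
  stmt4_general s₂ ν hν
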